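/- Let (Ω, P) be a probability space and X : Ω → ℍ a random quaternion with E[|X|²] = σ₀² and E[X·j·X̄] = 0 (unpolarized input with variance σ₀²), where all the relevant integrability conditions hold. Let μ be a pure unit quaternion, K and η real numbers, and set Y = K·(X − η·μ·X·j) pointwise. Then E[|Y|²] = σ₀²·K²·(1 + η²) and E[Y·j·Ȳ] = 2·σ₀²·K²·η·μ; equivalently, the quaternion spectral density of the output is σ₀²·K²·(1 + η² + 2·η·μ). -/

import Mathlib

open Quaternion MeasureTheory

noncomputable section

/-- The imaginary unit `i` of the quaternions. -/
def qi : ℍ[ℝ] := ⟨0, 1, 0, 0⟩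

/-- The imaginary unit `j` of the quaternions. -/
def qj : ℍ[ℝ] := ⟨0, 0, 1, 0⟩

/-- The embedding `ι : ℂ → ℍ` sending `a + b·√(−1)` to `a + b·j`. -/
def iotaC (z : ℂ) : ℍ[ℝ] := ⟨z.re, 0, z.im, 0⟩

/-- The identification `Φ : ℂ² → ℍ`, `Φ(z₁, z₂) = ι(z₁) + i·ι(z₂)`. -/
def PhiMap (z : Fin 2 → ℂ) : ℍ[ℝ] := iotaC (z 0) + qi * iotaC (z 1)

/-- A quaternion is a pure unit quaternion if its real part is `0` and its modulus is `1`. -/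
def IsPureUnit (μ : ℍ[ℝ]) : Prop := μ.re = 0 ∧ ‖μ‖ = 1

/-- The quaternion exponential. -/
def qexp (q : ℍ[ℝ]) : ℍ[ℝ] := NormedSpace.exp q

/-- The Euclidean inner product on `ℍ ≅ ℝ⁴`: `⟨p, q⟩` is the real part of `p·q̄`. -/
def qinner (p q : ℍ[ℝ]) : ℝ := (p * star q).re

/-!
Write `A = x j x̄`. Since `j² = -1` and `star (μ x j) = -j x̄ μ̄`, the filter output
`y = K (x - η μ x j)` satisfies, pointwise and for every quaternion `μ`,
`|y|² = K² ((1 + η²|μ|²)|x|² + 2η Re (A μ̄))` and `y j ȳ = K² (A + 2η|x|² Im μ + η² μ A μ̄)`.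
Both right-hand sides are affine in `|x|²` and `A`, so taking expectations replaces these by
`σ₀²` and `E[A] = 0`; for a pure unit `μ` we have `|μ| = 1` and `Im μ = μ`.
-/

@[simp] lemma qj_re : qj.re = 0 := rfl
@[simp] lemma qj_imI : qj.imI = 0 := rfl
@[simp] lemma qj_imJ : qj.imJ = 1 := rfl
@[simp] lemma qj_imK : qj.imK = 0 := rfl

def hermitianFilter (K η : ℝ) (μ x : ℍ[ℝ]) : ℍ[ℝ] := (K : ℍ[ℝ]) * (x - (η : ℍ[ℝ]) * (μ * x * qj))

lemma normSq_hermitianFilter (K η : ℝ) (μ x : ℍ[ℝ]) :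
    normSq (hermitianFilter K η μ x) =
      K ^ 2 * ((1 + η ^ 2 * normSq μ) * normSq x + 2 * η * (x * qj * star x * star μ).re) := by
  simp [hermitianFilter, normSq_def']
  ring

lemma hermitianFilter_mul_qj_mul_star (K η : ℝ) (μ x : ℍ[ℝ]) :
    hermitianFilter K η μ x * qj * star (hermitianFilter K η μ x) =
      K ^ 2 • (x * qj * star x + (2 * η * normSq x) • μ.im +
        η ^ 2 • (μ * (x * qj * star x) * star μ)) := by
  ext <;> simp [hermitianFilter, normSq_def'] <;> ring

lemma im_eq_self_of_re_eq_zero {μ : ℍ[ℝ]} (h : μ.re = 0) : μ.im = μ := by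
  simpa [h] using μ.re_add_im

def Quaternion.reCLM : ℍ[ℝ] →L[ℝ] ℝ := ⟨QuaternionAlgebra.reₗ _ _ _, continuous_re⟩

section Integral

variable {Ω : Type*} [MeasurableSpace Ω] {P : Measure Ω} {X : Ω → ℍ[ℝ]}

lemma integral_normSq_hermitianFilter (K η : ℝ) (μ : ℍ[ℝ])
    (hX : Integrable (fun ω => normSq (X ω)) P)
    (hA : Integrable (fun ω => X ω * qj * star (X ω)) P) :
    ∫ ω, normSq (hermitianFilter K η μ (X ω)) ∂P =
      K ^ 2 * ((1 + η ^ 2 * normSq μ) * ∫ ω, normSq (X ω) ∂P +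
        2 * η * ((∫ ω, X ω * qj * star (X ω) ∂P) * star μ).re) := by
  have hAμ := hA.mul_const (star μ)
  have hre : Integrable (fun ω => 2 * η * (X ω * qj * star (X ω) * star μ).re) P :=
    (reCLM.integrable_comp hAμ).const_mul _
  have hre_int : ∫ ω, (X ω * qj * star (X ω) * star μ).re ∂P =
      ((∫ ω, X ω * qj * star (X ω) ∂P) * star μ).re := by
    rw [← integral_mul_const_of_integrable hA]
    exact reCLM.integral_comp_comm hAμ
  simp_rw [normSq_hermitianFilter]
  rw [integral_const_mul, integral_add (hX.const_mul _) hre, integral_const_mul,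
    integral_const_mul, hre_int]

lemma integral_hermitianFilter_mul_qj_mul_star (K η : ℝ) (μ : ℍ[ℝ])
    (hX : Integrable (fun ω => normSq (X ω)) P)
    (hA : Integrable (fun ω => X ω * qj * star (X ω)) P) :
    ∫ ω, hermitianFilter K η μ (X ω) * qj * star (hermitianFilter K η μ (X ω)) ∂P =
      K ^ 2 • ((∫ ω, X ω * qj * star (X ω) ∂P) + (2 * η * ∫ ω, normSq (X ω) ∂P) • μ.im +
        η ^ 2 • (μ * (∫ ω, X ω * qj * star (X ω) ∂P) * star μ)) := by
  have hXμ : Integrable (fun ω => (2 * η * normSq (X ω)) • μ.im) P :=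
    (hX.const_mul _).smul_const _
  have hμA : Integrable (fun ω => η ^ 2 • (μ * (X ω * qj * star (X ω)) * star μ)) P :=
    ((hA.const_mul μ).mul_const (star μ)).smul (η ^ 2)
  simp_rw [hermitianFilter_mul_qj_mul_star]
  rw [integral_smul, integral_add (hA.fun_add hXμ) hμA, integral_add hA hXμ,
    integral_smul_const, integral_const_mul, integral_smul,
    integral_mul_const_of_integrable (hA.const_mul μ), integral_const_mul_of_integrable hA]

end Integral

theorem hermitian_filter_unpolarized_input_general {Ω : Type*} [MeasurableSpace Ω]
    (P : Measure Ω) (X : Ω → ℍ[ℝ]) (σ₀ : ℝ)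
    (hint₁ : Integrable (fun ω => Quaternion.normSq (X ω)) P)
    (hint₂ : ∀ p q : ℍ[ℝ], Integrable (fun ω => p * X ω * q * star (X ω)) P)
    (hX₁ : ∫ ω, Quaternion.normSq (X ω) ∂P = σ₀ ^ 2)
    (hX₂ : ∫ ω, X ω * qj * star (X ω) ∂P = 0)
    (μ : ℍ[ℝ]) (hμ : IsPureUnit μ) (K η : ℝ)
    (Y : Ω → ℍ[ℝ]) (hY : ∀ ω, Y ω = (K : ℍ[ℝ]) * (X ω - (η : ℍ[ℝ]) * (μ * X ω * qj))) :
    (∫ ω, Quaternion.normSq (Y ω) ∂P) = σ₀ ^ 2 * K ^ 2 * (1 + η ^ 2) ∧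
    (∫ ω, Y ω * qj * star (Y ω) ∂P) = ((2 * σ₀ ^ 2 * K ^ 2 * η : ℝ) : ℍ[ℝ]) * μ := by
  have hA : Integrable (fun ω => X ω * qj * star (X ω)) P := by simpa using hint₂ 1 qj
  have hμ_normSq : normSq μ = 1 := by rw [normSq_eq_norm_mul_self, hμ.2, one_mul]
  obtain rfl : Y = fun ω => hermitianFilter K η μ (X ω) := funext hY
  constructor
  · rw [integral_normSq_hermitianFilter K η μ hint₁ hA, hX₁, hX₂, hμ_normSq]
    simp only [zero_mul, Quaternion.re_zero]
    ring
  · rw [integral_hermitianFilter_mul_qj_mul_star K η μ hint₁ hA, hX₁, hX₂,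
      im_eq_self_of_re_eq_zero hμ.1, coe_mul_eq_smul]
    simp only [mul_zero, zero_mul, smul_zero, zero_add, add_zero]
    module

/-- The spectral density of the response of a Hermitian filter to unpolarized white noise:
`E[|Y|²] = σ₀²·K²·(1 + η²)` and `E[Y·j·Ȳ] = 2·σ₀²·K²·η·μ`. -/
theorem hermitian_filter_unpolarized_input {Ω : Type*} [MeasurableSpace Ω]
    (P : Measure Ω) [IsProbabilityMeasure P] (X : Ω → ℍ[ℝ]) (σ₀ : ℝ)
    (hint₁ : Integrable (fun ω => Quaternion.normSq (X ω)) P)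
    (hint₂ : ∀ p q : ℍ[ℝ], Integrable (fun ω => p * X ω * q * star (X ω)) P)
    (hX₁ : ∫ ω, Quaternion.normSq (X ω) ∂P = σ₀ ^ 2)
    (hX₂ : ∫ ω, X ω * qj * star (X ω) ∂P = 0)
    (μ : ℍ[ℝ]) (hμ : IsPureUnit μ) (K η : ℝ)
    (Y : Ω → ℍ[ℝ]) (hY : ∀ ω, Y ω = (K : ℍ[ℝ]) * (X ω - (η : ℍ[ℝ]) * (μ * X ω * qj))) :
    (∫ ω, Quaternion.normSq (Y ω) ∂P) = σ₀ ^ 2 * K ^ 2 * (1 + η ^ 2) ∧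
    (∫ ω, Y ω * qj * star (Y ω) ∂P) = ((2 * σ₀ ^ 2 * K ^ 2 * η : ℝ) : ℍ[ℝ]) * μ :=
  hermitian_filter_unpolarized_input_general P X σ₀ hint₁ hint₂ hX₁ hX₂ μ hμ K η Y hY
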